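/- Let m, n, q be positive integers such that mnq is even. Then the series Σ_{k=1}^{∞} L_{nk+mnq} / ( Π_{j=0}^{2m} F_{nk+njq} ) converges, and its sum equals (1 / F_{mnq}) · Σ_{k=1}^{q} 1 / ( Π_{j=0}^{2m−1} F_{nk+njq} ). -/

import Mathlib

/-!
Binet's formulas give `F_{a+2t} - F_a = F_t L_{a+t}` for even `t`. Put `t = mnq` and
`P_k = ∏_{j<2m} F_{nk+njq}`. The `(2m+1)`-fold product in the `k`-th term is both
`P_k F_{nk+2t}` and `F_{nk} P_{k+q}`, so that term equals `(1/P_k - 1/P_{k+q}) / F_t`.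
The series therefore telescopes with lag `q`, and since `1/P_k → 0` only the first `q`
values of `1/P_k` survive.
-/

open Filter Topology

/-- The Lucas numbers: `L 0 = 2`, `L 1 = 1`, `L (n+2) = L (n+1) + L n`. -/
def lucas : ℕ → ℕ
  | 0 => 2
  | 1 => 1
  | n + 2 => lucas (n + 1) + lucas n

open Finset Real goldenRatio

theorem coe_lucas_eq : ∀ n, (lucas n : ℝ) = φ ^ n + ψ ^ n
  | 0 => by norm_num [lucas]
  | 1 => by simp [lucas]
  | n + 2 => by
    rw [lucas, Nat.cast_add, coe_lucas_eq n, coe_lucas_eq (n + 1), pow_add φ n 2, pow_add ψ n 2,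
      goldenRatio_sq, goldenConj_sq]
    ring

theorem coe_fib_add_two_mul (a t : ℕ) :
    (Nat.fib (a + 2 * t) : ℝ) = Nat.fib t * lucas (a + t) + (-1) ^ t * Nat.fib a := by
  have hφψ : φ ^ t * ψ ^ t = (-1) ^ t := by rw [← mul_pow, goldenRatio_mul_goldenConj]
  simp only [coe_fib_eq, coe_lucas_eq, pow_add, pow_mul']
  field_simp
  linear_combination (φ ^ a - ψ ^ a) * hφψ

theorem tendsto_fib_atTop : Tendsto Nat.fib atTop atTop :=
  (tendsto_add_atTop_iff_nat 2).mp Nat.fib_add_two_strictMono.tendsto_atTop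

theorem sum_range_sub_shift {M : Type*} [AddCommGroup M] (f : ℕ → M) (q N : ℕ) :
    ∑ k ∈ range N, (f k - f (k + q)) = ∑ k ∈ range q, f k - ∑ k ∈ range q, f (N + k) := by
  induction N with
  | zero => simp
  | succ N ih =>
    have h := (sum_range_succ' (fun k => f (N + k)) q).symm.trans (sum_range_succ _ q)
    simp only [add_zero, ← add_assoc] at h
    simp only [sum_range_succ, ih, add_right_comm N 1, eq_sub_of_add_eq h]
    abel

theorem sum_Icc_one_eq_sum_range {M : Type*} [AddCommMonoid M] (f : ℕ → M) (N : ℕ) :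
    ∑ k ∈ Icc 1 N, f k = ∑ k ∈ range N, f (k + 1) := by
  induction N with
  | zero => simp
  | succ N ih => rw [sum_Icc_succ_top (by omega), ih, sum_range_succ]

theorem tendsto_sum_Icc_sub_shift {M : Type*} [TopologicalSpace M] [AddCommGroup M]
    [IsTopologicalAddGroup M] {f : ℕ → M} (hf : Tendsto f atTop (𝓝 0)) (q : ℕ) :
    Tendsto (fun N => ∑ k ∈ Icc 1 N, (f k - f (k + q))) atTop (𝓝 (∑ k ∈ Icc 1 q, f k)) := by
  have hsum (N : ℕ) : ∑ k ∈ Icc 1 N, (f k - f (k + q))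
      = ∑ k ∈ Icc 1 q, f k - ∑ k ∈ range q, f (N + (k + 1)) := by
    simp only [sum_Icc_one_eq_sum_range, add_right_comm _ 1 q, ← add_assoc]
    exact sum_range_sub_shift (fun k => f (k + 1)) q N
  have htail : Tendsto (fun N => ∑ k ∈ range q, f (N + (k + 1))) atTop (𝓝 0) := by
    simpa using tendsto_finsetSum (range q) fun k _ => hf.comp (tendsto_add_atTop_nat (k + 1))
  simpa only [hsum, sub_zero] using tendsto_const_nhds.sub htail

theorem one_div_prod_sub_one_div_prod_succ {K : Type*} [Field K] (f : ℕ → K) (r : ℕ)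
    (hf : ∀ j ≤ r, f j ≠ 0) :
    1 / ∏ j ∈ range r, f j - 1 / ∏ j ∈ range r, f (j + 1)
      = (f r - f 0) / ∏ j ∈ range (r + 1), f j := by
  have hA : ∏ j ∈ range r, f j ≠ 0 := prod_ne_zero_iff.mpr fun j hj => hf j (mem_range.mp hj).le
  have hB : ∏ j ∈ range r, f (j + 1) ≠ 0 := prod_ne_zero_iff.mpr fun j hj => hf _ (mem_range.mp hj)
  have hP : ∏ j ∈ range (r + 1), f j ≠ 0 :=
    prod_ne_zero_iff.mpr fun j hj => hf j (mem_range_succ_iff.mp hj)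
  have hr : (1 / ∏ j ∈ range r, f j) * ∏ j ∈ range (r + 1), f j = f r := by
    rw [prod_range_succ]; field_simp
  have h0 : (1 / ∏ j ∈ range r, f (j + 1)) * ∏ j ∈ range (r + 1), f j = f 0 := by
    rw [prod_range_succ']; field_simp
  rw [eq_div_iff hP, sub_mul, hr, h0]

theorem lucas_div_prod_fib_eq {m n q k : ℕ} (hnk : 0 < n * k) (hmnq : 0 < m * n * q)
    (heven : Even (m * n * q)) :
    (lucas (n * k + m * n * q) : ℝ) / ∏ j ∈ range (2 * m + 1), (Nat.fib (n * k + n * j * q) : ℝ)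
      = 1 / Nat.fib (m * n * q) * (1 / ∏ j ∈ range (2 * m), (Nat.fib (n * k + n * j * q) : ℝ)
        - 1 / ∏ j ∈ range (2 * m), (Nat.fib (n * (k + q) + n * j * q) : ℝ)) := by
  have hfib {i : ℕ} (hi : 0 < i) : (Nat.fib i : ℝ) ≠ 0 :=
    Nat.cast_ne_zero.mpr (Nat.fib_pos.mpr hi).ne'
  have hshift (j : ℕ) : n * k + n * (j + 1) * q = n * (k + q) + n * j * q := by ring
  have hnum : (Nat.fib (n * k + n * (2 * m) * q) : ℝ) - Nat.fib (n * k + n * 0 * q)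
      = Nat.fib (m * n * q) * lucas (n * k + m * n * q) := by
    rw [show n * k + n * (2 * m) * q = n * k + 2 * (m * n * q) by ring, coe_fib_add_two_mul,
      heven.neg_one_pow]
    simp
  have key := one_div_prod_sub_one_div_prod_succ (fun j => (Nat.fib (n * k + n * j * q) : ℝ))
    (2 * m) fun j _ => hfib (by positivity)
  simp only [hshift, hnum] at key
  rw [key]
  field_simp [hfib hmnq]

theorem tendsto_one_div_prod_fib {n r : ℕ} (hn : 0 < n) (hr : r ≠ 0) (q : ℕ) :
    Tendsto (fun k => 1 / ∏ j ∈ range r, (Nat.fib (n * k + n * j * q) : ℝ)) atTop (𝓝 0) := by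
  have hle : ∀ᶠ k in atTop, Nat.fib (n * k) ≤ ∏ j ∈ range r, Nat.fib (n * k + n * j * q) := by
    filter_upwards [eventually_gt_atTop 0] with k hk
    simpa using single_le_prod' (f := fun j => Nat.fib (n * k + n * j * q))
      (fun j _ => Nat.fib_pos.mpr (by positivity))
      (mem_range.mpr (Nat.pos_of_ne_zero hr))
  have hprod := tendsto_atTop_mono' _ hle (tendsto_fib_atTop.comp (tendsto_id.const_mul_atTop' hn))
  simpa [Function.comp_def] using
    tendsto_inv_atTop_zero.comp ((tendsto_natCast_atTop_atTop (R := ℝ)).comp hprod)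

/-- Theorem (`mnq` even):
`Σ_{k=1}^{∞} L_{nk+mnq} / (Π_{j=0}^{2m} F_{nk+njq})
  = (1/F_{mnq}) Σ_{k=1}^{q} 1/(Π_{j=0}^{2m−1} F_{nk+njq})`. -/
theorem stmt_12 (m n q : ℕ) (hm : 0 < m) (hn : 0 < n) (hq : 0 < q)
    (heven : Even (m * n * q)) :
    Tendsto (fun N => ∑ k ∈ Finset.Icc 1 N,
        (lucas (n * k + m * n * q) : ℝ) /
          ∏ j ∈ Finset.range (2 * m + 1), (Nat.fib (n * k + n * j * q) : ℝ))
      atTop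
      (𝓝 ((1 / (Nat.fib (m * n * q) : ℝ)) *
        ∑ k ∈ Finset.Icc 1 q,
          (1 : ℝ) / ∏ j ∈ Finset.range (2 * m), (Nat.fib (n * k + n * j * q) : ℝ))) := by
  refine ((tendsto_sum_Icc_sub_shift (tendsto_one_div_prod_fib hn (by positivity) q) q).const_mul
    (1 / (Nat.fib (m * n * q) : ℝ))).congr fun N => ?_
  rw [mul_sum]
  refine sum_congr rfl fun k hk => ?_
  rw [lucas_div_prod_fib_eq (Nat.mul_pos hn (mem_Icc.mp hk).1) (by positivity) heven]
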